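/- In R = MvPowerSeries (Fin m) ℚ, the power series Td · (Σ_{r=2}^m (−1)^r · r(r−1) · ch_r) agrees in total degree m with (1/6) · e_1 · e_{m−1} + (m(3m−5)/12) · e_m. -/

import Mathlib

open Finset

noncomputable section

/-- The element of `MvPowerSeries (Fin m) ℚ` obtained by substituting the variable `X j`
into a one-variable formal power series `f`. -/
def substAt {m : ℕ} (j : Fin m) (f : PowerSeries ℚ) : MvPowerSeries (Fin m) ℚ :=
  fun n => if n.support ⊆ {j} then PowerSeries.coeff (R := ℚ) (n j) f else 0

/-- The one-variable power series `exp (−X) = Σ_{n ≥ 0} (−X)^n / n!`. -/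
def expNeg : PowerSeries ℚ := PowerSeries.mk fun n => (-1) ^ n / n.factorial

/-- `ch m r = Σ_{S ⊆ Fin m, |S| = r} ∏_{j ∈ S} exp (−X j)`, the `r`-th Chern character
term of the exterior powers, written in Chern roots. -/
def ch (m : ℕ) (r : ℕ) : MvPowerSeries (Fin m) ℚ :=
  ∑ S ∈ Finset.powersetCard r (Finset.univ : Finset (Fin m)),
    ∏ j ∈ S, substAt j expNeg

/-- `esymm m k = Σ_{S ⊆ Fin m, |S| = k} ∏_{j ∈ S} X j`, the `k`-th elementary symmetric
polynomial of the variables, as a multivariate power series. -/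
def esymm (m : ℕ) (k : ℕ) : MvPowerSeries (Fin m) ℚ :=
  ∑ S ∈ Finset.powersetCard k (Finset.univ : Finset (Fin m)),
    ∏ j ∈ S, MvPowerSeries.X j

/-- The Todd class `Td = ∏_{j=1}^m φ(X_j)` written in Chern roots, where `φ` is the
Todd series `X/(1 − e^{−X})`. -/
def Td (m : ℕ) (φ : PowerSeries ℚ) : MvPowerSeries (Fin m) ℚ :=
  ∏ j : Fin m, substAt j φ

/-- `Td′ = Σ_{j=1}^m φ′(X_j) · ∏_{k ≠ j} φ(X_k)`, the class
`Td′(A) = ∂/∂t Td(A + t·Id)|_{t=0}` written in Chern roots. -/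
def Td' (m : ℕ) (φ : PowerSeries ℚ) : MvPowerSeries (Fin m) ℚ :=
  ∑ j : Fin m, substAt j (PowerSeries.derivative (R := ℚ) φ) *
    ∏ k ∈ Finset.univ.erase j, substAt k φ

/-- Two multivariate power series agree in total degree `≤ p`: their coefficients at every
multi-exponent of total degree `≤ p` coincide. -/
def AgreeUpTo (m p : ℕ) (F G : MvPowerSeries (Fin m) ℚ) : Prop :=
  ∀ n : Fin m →₀ ℕ, (∑ j, n j) ≤ p → MvPowerSeries.coeff (R := ℚ) n F = MvPowerSeries.coeff (R := ℚ) n G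

/-- Two multivariate power series agree in total degree `p`: their coefficients at every
multi-exponent of total degree `p` coincide. -/
def AgreeAt (m p : ℕ) (F G : MvPowerSeries (Fin m) ℚ) : Prop :=
  ∀ n : Fin m →₀ ℕ, (∑ j, n j) = p → MvPowerSeries.coeff (R := ℚ) n F = MvPowerSeries.coeff (R := ℚ) n G

/-!
Writing `ch_r` as the `r`-th elementary symmetric function of the `E_j = exp (-X_j)` and
`r (r - 1)` as the number of ordered pairs in an `r`-set, inclusion–exclusion turns the
alternating sum into `Σ_{j ≠ k} E_j E_k ∏_{l ≠ j, k} (1 - E_l)`. Since `φ (X) (1 - exp (-X)) = X`,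
multiplying by `Td` gives `Σ_{j ≠ k} g (X_j) g (X_k) ∏_{l ≠ j, k} X_l` with
`g = φ exp (-X) = X / (exp X - 1) = 1 - X/2 + X²/12 + ⋯`. In total degree `m` only the quadratic
part `(X_j² + X_k²)/12 + X_j X_k / 4` of `g (X_j) g (X_k)` survives, and summing over ordered
pairs gives `(e_1 e_{m-1} - m e_m)/6 + m (m - 1)/4 · e_m`.
-/

open MvPowerSeries

lemma substAt_eq_subst {m : ℕ} (j : Fin m) (f : PowerSeries ℚ) :
    substAt j f = PowerSeries.subst (X j) f := by
  ext n
  rw [PowerSeries.coeff_subst_single]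
  change (if n.support ⊆ {j} then _ else 0) = _
  simp only [Finsupp.support_subset_singleton]

lemma coeff_substAt {m : ℕ} (j : Fin m) (f : PowerSeries ℚ) (n : Fin m →₀ ℕ) :
    coeff n (substAt j f) =
      if n = Finsupp.single j (n j) then PowerSeries.coeff (n j) f else 0 := by
  rw [substAt_eq_subst, PowerSeries.coeff_subst_single]

lemma substAt_mul {m : ℕ} (j : Fin m) (f g : PowerSeries ℚ) :
    substAt j (f * g) = substAt j f * substAt j g := by
  simp only [substAt_eq_subst, PowerSeries.subst_mul (PowerSeries.HasSubst.X j)]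

lemma substAt_one_sub {m : ℕ} (j : Fin m) (f : PowerSeries ℚ) :
    substAt j (1 - f) = 1 - substAt j f := by
  rw [substAt_eq_subst, substAt_eq_subst, ← PowerSeries.coe_substAlgHom (PowerSeries.HasSubst.X j),
    map_sub, map_one]

lemma substAt_X {m : ℕ} (j : Fin m) : substAt j PowerSeries.X = X j := by
  rw [substAt_eq_subst, PowerSeries.subst_X (PowerSeries.HasSubst.X j)]

lemma coeff_substAt_mul_substAt {m : ℕ} {j k : Fin m} (hjk : j ≠ k) (f g : PowerSeries ℚ)
    (n : Fin m →₀ ℕ) :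
    coeff n (substAt j f * substAt k g) =
      if n = Finsupp.single j (n j) + Finsupp.single k (n k) then
        PowerSeries.coeff (n j) f * PowerSeries.coeff (n k) g else 0 := by
  have hsplit : ∀ a b : Fin m →₀ ℕ, a = Finsupp.single j (a j) → b = Finsupp.single k (b k) →
      a = Finsupp.single j ((a + b) j) ∧ b = Finsupp.single k ((a + b) k) := by
    intro a b ha hb
    rw [ha, hb]
    simp [hjk, hjk.symm]
  rw [coeff_mul]
  split_ifs with hn
  · rw [sum_eq_single_of_mem (Finsupp.single j (n j), Finsupp.single k (n k))
      (HasAntidiagonal.mem_antidiagonal.2 hn.symm)]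
    · simp [coeff_substAt]
    rintro ⟨a, b⟩ hab hne
    rw [HasAntidiagonal.mem_antidiagonal] at hab
    subst hab
    simp only [coeff_substAt]
    split_ifs with ha hb <;> try simp
    exact absurd (Prod.ext (hsplit a b ha hb).1 (hsplit a b ha hb).2) hne
  · refine sum_eq_zero fun ⟨a, b⟩ hab => ?_
    rw [HasAntidiagonal.mem_antidiagonal] at hab
    subst hab
    simp only [coeff_substAt]
    split_ifs with ha hb <;> try simp
    obtain ⟨ha', hb'⟩ := hsplit a b ha hb
    exact absurd (congrArg₂ (· + ·) ha' hb') hn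

lemma agreeAt_sum {m p : ℕ} {ι : Type*} (s : Finset ι) {F G : ι → MvPowerSeries (Fin m) ℚ}
    (h : ∀ i ∈ s, AgreeAt m p (F i) (G i)) : AgreeAt m p (∑ i ∈ s, F i) (∑ i ∈ s, G i) :=
  fun n hn => by simp only [map_sum]; exact sum_congr rfl fun i hi => h i hi n hn

lemma AgreeAt.mul_X {m p : ℕ} {F G : MvPowerSeries (Fin m) ℚ} (h : AgreeAt m p F G)
    (l : Fin m) : AgreeAt m (p + 1) (F * X l) (G * X l) := by
  intro n hn
  rw [X, coeff_mul_monomial, coeff_mul_monomial]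
  split_ifs with hl
  · rw [h]
    have := congrArg Finsupp.degree (tsub_add_cancel_of_le hl)
    rw [map_add, Finsupp.degree_single] at this
    rw [← Finsupp.degree_eq_sum] at hn ⊢
    omega
  · rfl

lemma AgreeAt.mul_prod_X {m p : ℕ} {F G : MvPowerSeries (Fin m) ℚ} (h : AgreeAt m p F G)
    (U : Finset (Fin m)) :
    AgreeAt m (p + #U) (F * ∏ l ∈ U, X l) (G * ∏ l ∈ U, X l) := by
  induction U using Finset.induction_on with
  | empty => simpa using h
  | insert a U ha ih =>
    have reassoc : ∀ H : MvPowerSeries (Fin m) ℚ, H * ∏ l ∈ insert a U, X l =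
        (H * ∏ l ∈ U, X l) * X a := fun H => by
      rw [prod_insert ha]; ring
    rw [reassoc, reassoc, card_insert_of_notMem ha, ← add_assoc]
    exact ih.mul_X a

lemma agreeAt_substAt_mul_substAt {m : ℕ} {j k : Fin m} (hjk : j ≠ k) (f g : PowerSeries ℚ)
    (p : ℕ) :
    AgreeAt m p (substAt j f * substAt k g)
      (∑ i ∈ range (p + 1),
        C (PowerSeries.coeff i f * PowerSeries.coeff (p - i) g) *
          (X j ^ i * X k ^ (p - i))) := by
  intro n hn
  rw [← Finsupp.degree_eq_sum] at hn
  simp_rw [coeff_substAt_mul_substAt hjk, map_sum, coeff_C_mul,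
    X_pow_eq, monomial_mul_monomial, one_mul,
    coeff_monomial, mul_ite, mul_one, mul_zero]
  split_ifs with hn'
  · have hp : n j + n k = p := by
      rw [← hn]; conv_rhs => rw [hn']
      simp
    have hk : p - n j = n k := by omega
    rw [sum_eq_single_of_mem (n j) (mem_range.2 (by omega)), hk, if_pos hn']
    intro i _ hi
    refine if_neg fun h => hi ?_
    rw [h]; simp [hjk]
  · refine (sum_eq_zero fun i _ => if_neg fun h => hn' ?_).symm
    rw [h]; simp [hjk, hjk.symm]

lemma powersetCard_card_sub_one_univ {α : Type*} [Fintype α] [DecidableEq α] [Nonempty α] :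
    powersetCard (Fintype.card α - 1) (univ : Finset α) = univ.image (univ.erase ·) := by
  ext S
  simp only [mem_powersetCard_univ, mem_image, mem_univ, true_and]
  constructor
  · intro hS
    obtain ⟨k, hk⟩ : ∃ k, k ∉ S := by
      by_contra! h
      have := card_le_card (fun k _ => h k : univ ⊆ S)
      rw [card_univ] at this
      have := Fintype.card_pos (α := α)
      omega
    refine ⟨k, (eq_of_subset_of_card_le (fun l hl => mem_erase.2 ⟨?_, mem_univ l⟩) ?_).symm⟩
    · rintro rfl; exact hk hl
    · rw [card_erase_of_mem (mem_univ k), card_univ, hS]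
  · rintro ⟨k, rfl⟩
    rw [card_erase_of_mem (mem_univ k), card_univ]

lemma esymm_self (m : ℕ) : esymm m m = ∏ l, X l := by
  have : powersetCard m (univ : Finset (Fin m)) = {univ} := by
    simpa using powersetCard_self (univ : Finset (Fin m))
  rw [esymm, this, sum_singleton]

lemma esymm_one (m : ℕ) : esymm m 1 = ∑ l, X l := by
  simp [esymm, powersetCard_one]

lemma esymm_pred {m : ℕ} (hm : 0 < m) : esymm m (m - 1) = ∑ k, ∏ l ∈ univ.erase k, X l := by
  have : Nonempty (Fin m) := Fin.pos_iff_nonempty.mp hm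
  have h := powersetCard_card_sub_one_univ (α := Fin m)
  rw [Fintype.card_fin] at h
  rw [esymm, h, sum_image fun k _ l _ hkl => by simpa using congrArg (k ∉ ·) hkl]

lemma prod_eq_mul_mul_prod_sdiff_pair {ι M : Type*} [CommMonoid M] [DecidableEq ι]
    {s : Finset ι} {j k : ι} (hj : j ∈ s) (hk : k ∈ s) (hjk : j ≠ k) (f : ι → M) :
    ∏ i ∈ s, f i = f j * f k * ∏ i ∈ s \ {j, k}, f i := by
  rw [← prod_pair hjk, mul_comm, prod_sdiff (insert_subset hj (singleton_subset_iff.2 hk))]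

lemma X_mul_prod_erase {m : ℕ} {j k : Fin m} (hjk : j ≠ k) :
    X j * ∏ l ∈ univ.erase k, X l =
      (X j ^ 2 * ∏ l ∈ univ \ {j, k}, X l : MvPowerSeries (Fin m) ℚ) := by
  rw [← mul_prod_erase _ _ (mem_erase.2 ⟨hjk, mem_univ j⟩), sdiff_insert,
    sdiff_singleton_eq_erase]
  ring

lemma esymm_one_mul_esymm_pred {m : ℕ} (hm : 0 < m) :
    esymm m 1 * esymm m (m - 1) =
      ∑ p ∈ univ.offDiag, X p.1 ^ 2 * ∏ l ∈ univ \ {p.1, p.2}, X l + m * esymm m m := by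
  rw [esymm_one, esymm_pred hm, sum_mul_sum, ← sum_product', ← diag_union_offDiag,
    sum_union (disjoint_diag_offDiag _), sum_diag, add_comm]
  congr 1
  · exact sum_congr rfl fun p hp => X_mul_prod_erase (mem_offDiag.1 hp).2.2
  · simp_rw [mul_prod_erase univ _ (mem_univ _)]
    rw [sum_const, card_univ, Fintype.card_fin, nsmul_eq_mul, esymm_self]

lemma sum_offDiag_quadratic_mul_prod_X {m : ℕ} (hm : 0 < m) (b c : ℚ) :
    ∑ p ∈ univ.offDiag,
        (C b * X p.2 ^ 2 + C c * (X p.1 * X p.2) + C b * X p.1 ^ 2) *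
          ∏ l ∈ univ \ {p.1, p.2}, X l =
      C (2 * b) * (esymm m 1 * esymm m (m - 1)) +
        C (c * (m * m - m) - 2 * b * m) * esymm m m := by
  have hswap : ∑ p ∈ univ.offDiag, X p.2 ^ 2 * ∏ l ∈ univ \ {p.1, p.2}, X l =
      ∑ p ∈ univ.offDiag, (X p.1 ^ 2 * ∏ l ∈ univ \ {p.1, p.2}, X l :
        MvPowerSeries (Fin m) ℚ) :=
    sum_nbij' Prod.swap Prod.swap (by simp [eq_comm]) (by simp [eq_comm])
      (by simp) (by simp) (fun p _ => by rw [Prod.fst_swap, Prod.snd_swap, pair_comm])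
  have hmixed : ∀ p ∈ (univ : Finset (Fin m)).offDiag,
      X p.1 * (X p.2 * ∏ l ∈ univ \ {p.1, p.2}, X l) = esymm m m := fun p hp => by
    rw [esymm_self, prod_eq_mul_mul_prod_sdiff_pair (mem_univ p.1) (mem_univ p.2)
      (mem_offDiag.1 hp).2.2, mul_assoc]
  simp only [add_mul, sum_add_distrib, mul_assoc, ← mul_sum]
  rw [hswap, sum_congr rfl hmixed, sum_const, offDiag_card, card_univ,
    Fintype.card_fin, esymm_one_mul_esymm_pred hm, nsmul_eq_mul,
    Nat.cast_sub (Nat.le_mul_self m)]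
  simp only [map_sub, map_mul, map_natCast, map_ofNat, Nat.cast_mul]
  ring

section InclusionExclusion

variable {ι R : Type*} [DecidableEq ι]

lemma sum_Icc_prod [CommSemiring R] (f : ι → R) {s t : Finset ι} (h : t ⊆ s) :
    ∑ S ∈ Icc t s, ∏ i ∈ S, f i = (∏ i ∈ t, f i) * ∏ i ∈ s \ t, (1 + f i) := by
  have hdisj : ∀ u ∈ (s \ t).powerset, Disjoint t u := fun u hu =>
    disjoint_of_subset_right (mem_powerset.1 hu) disjoint_sdiff
  rw [Icc_eq_image_powerset h, sum_image, prod_one_add, mul_sum]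
  · exact sum_congr rfl fun u hu => prod_union (hdisj u hu)
  · intro u hu v hv huv
    rw [← union_sdiff_cancel_left (hdisj u hu), ← union_sdiff_cancel_left (hdisj v hv)]
    exact congrArg (· \ t) huv

lemma sum_powerset_card_mul_card_sub_one_mul_prod [CommRing R] (f : ι → R) (s : Finset ι) :
    ∑ S ∈ s.powerset, (#S : R) * ((#S : R) - 1) * ∏ i ∈ S, f i =
      ∑ p ∈ s.offDiag, f p.1 * f p.2 * ∏ i ∈ s \ {p.1, p.2}, (1 + f i) := by
  have hpairs : ∀ S : Finset ι,
      (#S : R) * ((#S : R) - 1) * ∏ i ∈ S, f i = ∑ _p ∈ S.offDiag, ∏ i ∈ S, f i := by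
    intro S
    rw [sum_const, offDiag_card, nsmul_eq_mul, Nat.cast_sub (Nat.le_mul_self _), Nat.cast_mul]
    ring
  rw [sum_congr rfl fun S _ => hpairs S,
    sum_comm' (t' := s.offDiag) (s' := fun p => Icc {p.1, p.2} s)]
  · refine sum_congr rfl fun p hp => ?_
    obtain ⟨hj, hk, hjk⟩ := mem_offDiag.1 hp
    rw [sum_Icc_prod f (insert_subset hj (singleton_subset_iff.2 hk)), prod_pair hjk]
  · intro S p
    simp only [mem_powerset, mem_offDiag, mem_Icc, insert_subset_iff, singleton_subset_iff]
    tauto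

end InclusionExclusion

lemma sum_Icc_two_weighted_ch (m : ℕ) :
    ∑ r ∈ Icc 2 m, (-1 : MvPowerSeries (Fin m) ℚ) ^ r * (r : MvPowerSeries (Fin m) ℚ) *
        ((r : MvPowerSeries (Fin m) ℚ) - 1) * ch m r =
      ∑ S ∈ (univ : Finset (Fin m)).powerset, (#S : MvPowerSeries (Fin m) ℚ) *
        ((#S : MvPowerSeries (Fin m) ℚ) - 1) * ∏ j ∈ S, -substAt j expNeg := by
  have hIcc : Icc 2 m ⊆ range (m + 1) := fun r hr => by
    simp only [mem_Icc, mem_range] at hr ⊢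
    omega
  rw [sum_powerset, card_univ, Fintype.card_fin, sum_subset hIcc]
  · refine sum_congr rfl fun r _ => ?_
    rw [ch, mul_sum]
    refine sum_congr rfl fun S hS => ?_
    rw [prod_neg, (mem_powersetCard.1 hS).2]
    ring
  · intro r hr hr'
    obtain rfl | rfl : r = 0 ∨ r = 1 := by
      simp only [mem_range, mem_Icc, not_and_or] at hr hr'
      omega
    all_goals simp

lemma td_mul_sum_Icc_two_weighted_ch (m : ℕ) {φ : PowerSeries ℚ}
    (hφ : φ * (1 - expNeg) = PowerSeries.X) :
    Td m φ * ∑ r ∈ Icc 2 m, (-1 : MvPowerSeries (Fin m) ℚ) ^ r * (r : MvPowerSeries (Fin m) ℚ) *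
        ((r : MvPowerSeries (Fin m) ℚ) - 1) * ch m r =
      ∑ p ∈ (univ : Finset (Fin m)).offDiag, substAt p.1 (φ * expNeg) *
        substAt p.2 (φ * expNeg) * ∏ l ∈ univ \ {p.1, p.2}, X l := by
  have hX : ∀ l : Fin m, substAt l φ * (1 + -substAt l expNeg) = X l := fun l => by
    rw [← sub_eq_add_neg, ← substAt_one_sub, ← substAt_mul, hφ, substAt_X]
  rw [sum_Icc_two_weighted_ch, sum_powerset_card_mul_card_sub_one_mul_prod, mul_sum]
  refine sum_congr rfl fun p hp => ?_
  rw [Td, prod_eq_mul_mul_prod_sdiff_pair (mem_univ p.1) (mem_univ p.2) (mem_offDiag.1 hp).2.2,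
    substAt_mul, substAt_mul, ← prod_congr rfl fun l _ => hX l, prod_mul_distrib]
  ring

lemma coeff_todd_mul_expNeg {φ : PowerSeries ℚ} (hφ : φ * (1 - expNeg) = PowerSeries.X) :
    PowerSeries.coeff 0 (φ * expNeg) = 1 ∧ PowerSeries.coeff 1 (φ * expNeg) = -(1 / 2) ∧
      PowerSeries.coeff 2 (φ * expNeg) = 1 / 12 := by
  have h1 := congrArg (PowerSeries.coeff 1) hφ
  have h2 := congrArg (PowerSeries.coeff 2) hφ
  have h3 := congrArg (PowerSeries.coeff 3) hφ
  norm_num [expNeg, PowerSeries.coeff_mul, Nat.sum_antidiagonal_eq_sum_range_succ_mk,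
    sum_range_succ, PowerSeries.coeff_one, PowerSeries.coeff_X, Nat.factorial] at h1 h2 h3 ⊢
  refine ⟨by linarith, by linarith, by linarith⟩

/-- `Td · (Σ_{r=2}^m (−1)^r · r(r−1) · ch_r)` agrees in total degree `m` with
`(1/6) · e_1 · e_{m−1} + (m(3m−5)/12) · e_m`.  (The term `e_{m−1}` presupposes `1 ≤ m`.) -/
theorem td_mul_second_weighted_sum_ch (m : ℕ) (hm : 0 < m) (φ : PowerSeries ℚ)
    (hφ : φ * (1 - expNeg) = PowerSeries.X) :
    AgreeAt m m
      (Td m φ * ∑ r ∈ Finset.Icc 2 m,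
        (-1 : MvPowerSeries (Fin m) ℚ) ^ r * (r : MvPowerSeries (Fin m) ℚ) *
          ((r : MvPowerSeries (Fin m) ℚ) - 1) * ch m r)
      (MvPowerSeries.C (σ := Fin m) (R := ℚ) (1 / 6 : ℚ) * (esymm m 1 * esymm m (m - 1)) +
        MvPowerSeries.C (σ := Fin m) (R := ℚ) ((m : ℚ) * (3 * (m : ℚ) - 5) / 12) * esymm m m) := by
  obtain ⟨hg0, hg1, hg2⟩ := coeff_todd_mul_expNeg hφ
  have hquad : ∀ j k : Fin m, j ≠ k →
      AgreeAt m 2 (substAt j (φ * expNeg) * substAt k (φ * expNeg))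
        (C (1 / 12) * X k ^ 2 + C (1 / 4) * (X j * X k) + C (1 / 12) * X j ^ 2) := by
    intro j k hjk
    have := agreeAt_substAt_mul_substAt hjk (φ * expNeg) (φ * expNeg) 2
    simp only [sum_range_succ, sum_range_zero, hg0, hg1, hg2] at this
    norm_num at this
    exact this
  rw [td_mul_sum_Icc_two_weighted_ch m hφ, show (1 / 6 : ℚ) = 2 * (1 / 12) by norm_num,
    show (m : ℚ) * (3 * m - 5) / 12 = 1 / 4 * (m * m - m) - 2 * (1 / 12) * m by ring,
    ← sum_offDiag_quadratic_mul_prod_X hm]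
  refine agreeAt_sum _ fun p hp => ?_
  obtain ⟨-, -, hjk⟩ := mem_offDiag.1 hp
  have hdeg : 2 + #(univ \ {p.1, p.2}) = m := by
    have h2 : 2 ≤ m := by simpa [card_pair hjk] using card_le_univ {p.1, p.2}
    rw [card_sdiff_of_subset (subset_univ _), card_pair hjk, card_univ, Fintype.card_fin]
    omega
  have := (hquad _ _ hjk).mul_prod_X (univ \ {p.1, p.2})
  rwa [hdeg] at this
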